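/- arXiv:1103.3493 — 5 statements merged into one kernel-verified Lean document; each statement's English description precedes it below -/
import Mathlib

section
/- Let C be a preorder and J a Grothendieck topology (coverage) on C. Then the set Id_J(C) of J-ideals on C, ordered by subset inclusion, is a frame: it has arbitrary joins (given by J-closure of unions) and finite meets (given by intersections), and binary meets distribute over arbitrary joins. -/
/-- A `J`-ideal on a preorder `C` equipped with a coverage `J`: a downward-closed
subset closed under the covering families of `J`. -/
def IsJIdeal {C : Type*} [Preorder C] (J : C → Set (Set C)) (I : Set C) : Prop :=
  (∀ a ∈ I, ∀ b, b ≤ a → b ∈ I) ∧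
  ∀ c, ∀ S ∈ J c, (∀ d ∈ S, d ∈ I) → c ∈ I

/-- The `J`-closure of a subset: the smallest `J`-ideal containing it. -/
def JClosure {C : Type*} [Preorder C] (J : C → Set (Set C)) (X : Set C) : Set C :=
  ⋂₀ {I | IsJIdeal J I ∧ X ⊆ I}

lemma JClosure_isJIdeal {C : Type*} [Preorder C] (J : C → Set (Set C)) (X : Set C) :
    IsJIdeal J (JClosure J X) := by
  constructor
  · intro a ha b hb I hI
    exact hI.1.1 a (ha I hI) b hb
  · intro c S hS hd I hI
    exact hI.1.2 c S hS (fun d hdS => hd d hdS I hI)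

lemma subset_JClosure {C : Type*} [Preorder C] (J : C → Set (Set C)) (X : Set C) :
    X ⊆ JClosure J X := fun x hx I hI => hI.2 hx

lemma JClosure_min {C : Type*} [Preorder C] (J : C → Set (Set C)) {X I : Set C}
    (hI : IsJIdeal J I) (hXI : X ⊆ I) : JClosure J X ⊆ I :=
  fun _ hx => hx I ⟨hI, hXI⟩

/-- The set `Id_J(C)` of `J`-ideals on a preorder `C` equipped with a Grothendieck
topology `J`, ordered by inclusion, is a frame: binary meets are intersections,
arbitrary joins are `J`-closures of unions, and binary meets distribute over
arbitrary joins. -/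
theorem statement_0 {C : Type*} [Preorder C] (J : C → Set (Set C))
    (hsub : ∀ c, ∀ S ∈ J c, ∀ d ∈ S, d ≤ c)
    (hstab : ∀ c, ∀ S ∈ J c, ∀ c', c' ≤ c → {d | d ∈ S ∧ d ≤ c'} ∈ J c')
    (hmax : ∀ c : C, {d | d ≤ c} ∈ J c)
    (htrans : ∀ c : C, ∀ S ⊆ {d | d ≤ c}, ∀ T ∈ J c,
      (∀ c' ∈ T, {d | d ∈ S ∧ d ≤ c'} ∈ J c') → S ∈ J c) :
    -- binary meets: the intersection of two J-ideals is a J-ideal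
    (∀ I₁ I₂, IsJIdeal J I₁ → IsJIdeal J I₂ → IsJIdeal J (I₁ ∩ I₂)) ∧
    -- arbitrary joins: the J-closure of a union of J-ideals is the least upper bound
    (∀ K : Set (Set C), (∀ I ∈ K, IsJIdeal J I) →
      IsJIdeal J (JClosure J (⋃₀ K)) ∧
      (∀ I ∈ K, I ⊆ JClosure J (⋃₀ K)) ∧
      (∀ I', IsJIdeal J I' → (∀ I ∈ K, I ⊆ I') → JClosure J (⋃₀ K) ⊆ I')) ∧
    -- binary meets distribute over arbitrary joins
    (∀ I, IsJIdeal J I → ∀ K : Set (Set C), (∀ I' ∈ K, IsJIdeal J I') →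
      I ∩ JClosure J (⋃₀ K) = JClosure J (⋃₀ ((fun I' => I ∩ I') '' K))) := by
  refine ⟨?_, ?_, ?_⟩
  · intro I₁ I₂ h₁ h₂
    exact ⟨fun a ha b hb => ⟨h₁.1 a ha.1 b hb, h₂.1 a ha.2 b hb⟩,
      fun c S hS hd => ⟨h₁.2 c S hS (fun d hdS => (hd d hdS).1),
        h₂.2 c S hS (fun d hdS => (hd d hdS).2)⟩⟩
  · intro K _
    exact ⟨JClosure_isJIdeal J _,
      fun I hI => fun x hx => subset_JClosure J _ ⟨I, hI, hx⟩,
      fun I' hI' hsub' => JClosure_min J hI' (fun x ⟨I, hI, hx⟩ => hsub' I hI hx)⟩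
  · intro I hI K hK
    set RHS := JClosure J (⋃₀ ((fun I' => I ∩ I') '' K)) with hRHS
    apply Set.Subset.antisymm
    · -- the localized ideal trick
      set M : Set C := {c | ∀ d ∈ I, d ≤ c → d ∈ RHS} with hM
      have hMideal : IsJIdeal J M := by
        constructor
        · intro a ha b hb d hdI hdb
          exact ha d hdI (le_trans hdb hb)
        · intro c S hS hSM d hdI hdc
          have hS' := hstab c S hS d hdc
          refine (JClosure_isJIdeal J _).2 d _ hS' ?_
          rintro e ⟨heS, hed⟩
          exact hSM e heS e (hI.1 d hdI e hed) le_rfl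
      have hKM : JClosure J (⋃₀ K) ⊆ M := by
        apply JClosure_min J hMideal
        rintro c ⟨I', hI', hc⟩ d hdI hdc
        have : d ∈ I ∩ I' := ⟨hdI, (hK I' hI').1 c hc d hdc⟩
        exact subset_JClosure J _ ⟨I ∩ I', ⟨I', hI', rfl⟩, this⟩
      rintro c ⟨hcI, hcCl⟩
      exact hKM hcCl c hcI le_rfl
    · apply JClosure_min J
      · exact ⟨fun a ha b hb => ⟨hI.1 a ha.1 b hb,
          (JClosure_isJIdeal J _).1 a ha.2 b hb⟩,
          fun c S hS hd => ⟨hI.2 c S hS (fun d h => (hd d h).1),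
            (JClosure_isJIdeal J _).2 c S hS (fun d h => (hd d h).2)⟩⟩
      · rintro x ⟨_, ⟨I', hI', rfl⟩, hx⟩
        exact ⟨hx.1, subset_JClosure J _ ⟨I', hI', hx.2⟩⟩
end

section
/- Let C be a preorder and J a subcanonical Grothendieck topology on C (i.e., for every J-covering sieve S on c, c is the supremum in C of the elements of S). Then for every c ∈ C, the principal J-ideal generated by c equals the principal downset (c)↓ = {d ∈ C : d ≤ c}. -/
/-- If `J` is a subcanonical Grothendieck topology on a preorder `C`, then for every
`c ∈ C` the principal `J`-ideal generated by `c` (the smallest `J`-ideal containing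
`c`) equals the principal downset `{d | d ≤ c}`. -/
theorem statement_1 {C : Type*} [Preorder C] (J : C → Set (Set C))
    (hsub : ∀ c, ∀ S ∈ J c, ∀ d ∈ S, d ≤ c)
    (hstab : ∀ c, ∀ S ∈ J c, ∀ c', c' ≤ c → {d | d ∈ S ∧ d ≤ c'} ∈ J c')
    (hmax : ∀ c : C, {d | d ≤ c} ∈ J c)
    (htrans : ∀ c : C, ∀ S ⊆ {d | d ≤ c}, ∀ T ∈ J c,
      (∀ c' ∈ T, {d | d ∈ S ∧ d ≤ c'} ∈ J c') → S ∈ J c)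
    (hsubcan : ∀ c, ∀ S ∈ J c, ∀ c', (∀ d ∈ S, d ≤ c') → c ≤ c') :
    ∀ c : C, JClosure J {c} = {d | d ≤ c} := by
  intro c
  apply Set.eq_of_subset_of_subset
  · intro d hd
    exact hd {d | d ≤ c} ⟨⟨fun a ha b hb => hb.trans ha,
      fun c' S hS hall => hsubcan c' S hS c hall⟩,
      fun x hx => by simp_all⟩
  · intro d hd I hI
    exact hI.1.1 c (hI.2 rfl) d hd
end

section
/- Let C be a preorder, J a Grothendieck topology on C, and I a J-ideal on C. Then I is a principal J-ideal (i.e., I equals the J-closure of some downset (c)↓) if and only if I is J-compact, meaning: for every family {I_k} of J-ideals whose join (J-closure of the union) equals I, there exists a J-covering family {c_h ≤ c} in C such that each principal J-ideal (c_h)↓_J is contained in some I_k and the join of the (c_h)↓_J equals I. -/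
section Aux

variable {C : Type*} [Preorder C] (J : C → Set (Set C))

lemma jclosure_isIdeal (X : Set C) : IsJIdeal J (JClosure J X) := by
  constructor
  · intro a ha b hba I hI
    exact hI.1.1 a (ha I hI) b hba
  · intro c S hS hd I hI
    exact hI.1.2 c S hS (fun d hdS => hd d hdS I hI)

lemma subset_jclosure (X : Set C) : X ⊆ JClosure J X :=
  fun _ hx _ hI => hI.2 hx

lemma jclosure_min {X I : Set C} (hI : IsJIdeal J I) (hX : X ⊆ I) :
    JClosure J X ⊆ I := Set.sInter_subset_of_mem ⟨hI, hX⟩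

lemma jcover_up
    (hmax : ∀ c : C, {d | d ≤ c} ∈ J c)
    (htrans : ∀ c : C, ∀ S ⊆ {d | d ≤ c}, ∀ T ∈ J c,
      (∀ c' ∈ T, {d | d ∈ S ∧ d ≤ c'} ∈ J c') → S ∈ J c)
    {c : C} {S W : Set C} (hS : S ∈ J c)
    (hSW : S ⊆ W) (hWc : W ⊆ {d | d ≤ c})
    (hWdc : ∀ a ∈ W, ∀ b, b ≤ a → b ∈ W) : W ∈ J c := by
  apply htrans c W hWc S hS
  intro e he
  have heW : e ∈ W := hSW he
  have : {d | d ∈ W ∧ d ≤ e} = {d | d ≤ e} := by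
    ext d
    constructor
    · exact fun hd => hd.2
    · exact fun hd => ⟨hWdc e heW d hd, hd⟩
  rw [this]
  exact hmax e

lemma jclosure_down_char
    (hsub : ∀ c, ∀ S ∈ J c, ∀ d ∈ S, d ≤ c)
    (hstab : ∀ c, ∀ S ∈ J c, ∀ c', c' ≤ c → {d | d ∈ S ∧ d ≤ c'} ∈ J c')
    (hmax : ∀ c : C, {d | d ≤ c} ∈ J c)
    (htrans : ∀ c : C, ∀ S ⊆ {d | d ≤ c}, ∀ T ∈ J c,
      (∀ c' ∈ T, {d | d ∈ S ∧ d ≤ c'} ∈ J c') → S ∈ J c)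
    {X : Set C} (hX : ∀ a ∈ X, ∀ b, b ≤ a → b ∈ X)
    {a : C} (ha : a ∈ JClosure J X) : ∃ S ∈ J a, S ⊆ X := by
  have key : IsJIdeal J {a | ∃ S ∈ J a, S ⊆ X} := by
    constructor
    · rintro a ⟨S, hS, hSX⟩ b hba
      refine ⟨{d | d ∈ S ∧ d ≤ b}, hstab a S hS b hba, fun d hd => hSX hd.1⟩
    · rintro c T hT hTmem
      refine ⟨{d | d ∈ X ∧ d ≤ c}, ?_, fun d hd => hd.1⟩
      apply htrans c _ (fun d hd => hd.2) T hT
      intro c' hc'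
      obtain ⟨S', hS', hS'X⟩ := hTmem c' hc'
      have hc'c : c' ≤ c := hsub c T hT c' hc'
      apply jcover_up J hmax htrans hS'
      · intro d hd
        have hdc' : d ≤ c' := hsub c' S' hS' d hd
        exact ⟨⟨hS'X hd, le_trans hdc' hc'c⟩, hdc'⟩
      · intro d hd
        exact hd.2
      · rintro p ⟨⟨hpX, hpc⟩, hpc'⟩ q hq
        exact ⟨⟨hX p hpX q hq, le_trans hq hpc⟩, le_trans hq hpc'⟩
  have hXsub : X ⊆ {a | ∃ S ∈ J a, S ⊆ X} :=
    fun x hx => ⟨{d | d ≤ x}, hmax x, fun d hd => hX x hx d hd⟩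
  exact jclosure_min J key hXsub ha

end Aux

/-- Let `C` be a preorder with a Grothendieck topology `J` and `I` a `J`-ideal.
Then `I` is a principal `J`-ideal (the `J`-closure of some principal downset) iff
`I` is `J`-compact: for every family of `J`-ideals whose join (the `J`-closure of
the union) is `I`, there is a `J`-covering family `{c_h ≤ c}` such that each
principal `J`-ideal `(c_h)↓_J` is contained in some member of the family and the
join of the `(c_h)↓_J` equals `I`. -/
theorem statement_2 {C : Type*} [Preorder C] (J : C → Set (Set C))
    (hsub : ∀ c, ∀ S ∈ J c, ∀ d ∈ S, d ≤ c)
    (hstab : ∀ c, ∀ S ∈ J c, ∀ c', c' ≤ c → {d | d ∈ S ∧ d ≤ c'} ∈ J c')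
    (hmax : ∀ c : C, {d | d ≤ c} ∈ J c)
    (htrans : ∀ c : C, ∀ S ⊆ {d | d ≤ c}, ∀ T ∈ J c,
      (∀ c' ∈ T, {d | d ∈ S ∧ d ≤ c'} ∈ J c') → S ∈ J c)
    (I : Set C) (hI : IsJIdeal J I) :
    (∃ c : C, I = JClosure J {d | d ≤ c}) ↔
    (∀ K : Set (Set C), (∀ I' ∈ K, IsJIdeal J I') → JClosure J (⋃₀ K) = I →
      ∃ c : C, ∃ S ∈ J c,
        (∀ h ∈ S, ∃ I' ∈ K, JClosure J {d | d ≤ h} ⊆ I') ∧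
        JClosure J (⋃ h ∈ S, JClosure J {d | d ≤ h}) = I) := by
  constructor
  · rintro ⟨c, hc⟩ K hK hjoin
    have hcI : c ∈ I := by
      rw [hc]; exact subset_jclosure J _ (le_refl c)
    have hUdc : ∀ a ∈ ⋃₀ K, ∀ b, b ≤ a → b ∈ ⋃₀ K := by
      rintro a ⟨I', hI'K, haI'⟩ b hba
      exact ⟨I', hI'K, (hK I' hI'K).1 a haI' b hba⟩
    have hcK : c ∈ JClosure J (⋃₀ K) := by rw [hjoin]; exact hcI
    obtain ⟨S, hS, hSX⟩ := jclosure_down_char J hsub hstab hmax htrans hUdc hcK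
    set U := ⋃ h ∈ S, JClosure J {d | d ≤ h} with hU
    refine ⟨c, S, hS, ?_, ?_⟩
    · intro h hh
      obtain ⟨I', hI'K, hhI'⟩ := hSX hh
      exact ⟨I', hI'K, jclosure_min J (hK I' hI'K)
        (fun d hd => (hK I' hI'K).1 h hhI' d hd)⟩
    · apply subset_antisymm
      · apply jclosure_min J hI
        intro x hx
        simp only [hU, Set.mem_iUnion] at hx
        obtain ⟨h, hhS, hxh⟩ := hx
        have hhI : h ∈ I := hI.1 c hcI h (hsub c S hS h hhS)
        exact jclosure_min J hI (fun d hd => hI.1 h hhI d hd) hxh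
      · rw [hc]
        apply jclosure_min J (jclosure_isIdeal J U)
        intro b hb
        apply (jclosure_isIdeal J U).2 b {d | d ∈ S ∧ d ≤ b} (hstab c S hS b hb)
        intro d hd
        apply subset_jclosure J U
        simp only [hU, Set.mem_iUnion]
        exact ⟨d, hd.1, subset_jclosure J _ (le_refl d)⟩
  · intro hcomp
    set K : Set (Set C) := {I' | ∃ a ∈ I, I' = JClosure J {d | d ≤ a}} with hKdef
    have hK : ∀ I' ∈ K, IsJIdeal J I' := by
      rintro I' ⟨a, _, rfl⟩; exact jclosure_isIdeal J _
    have hKI : ∀ I' ∈ K, I' ⊆ I := by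
      rintro I' ⟨a, haI, rfl⟩
      exact jclosure_min J hI (fun d hd => hI.1 a haI d hd)
    have hjoin : JClosure J (⋃₀ K) = I := by
      apply subset_antisymm
      · apply jclosure_min J hI
        rintro x ⟨I', hI'K, hxI'⟩
        exact hKI I' hI'K hxI'
      · intro x hx
        apply subset_jclosure J (⋃₀ K)
        exact ⟨JClosure J {d | d ≤ x}, ⟨x, hx, rfl⟩, subset_jclosure J _ (le_refl x)⟩
    obtain ⟨c, S, hS, hmem, hU⟩ := hcomp K hK hjoin
    refine ⟨c, ?_⟩
    have hcI : c ∈ I := by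
      rw [← hU]
      apply (jclosure_isIdeal J _).2 c S hS
      intro h hh
      apply subset_jclosure J _
      exact Set.mem_iUnion.2 ⟨h, Set.mem_iUnion.2 ⟨hh, subset_jclosure J _ (le_refl h)⟩⟩
    apply subset_antisymm
    · rw [← hU]
      apply jclosure_min J (jclosure_isIdeal J {d | d ≤ c})
      intro x hx
      simp only [Set.mem_iUnion] at hx
      obtain ⟨h, hhS, hxh⟩ := hx
      have hhc : h ≤ c := hsub c S hS h hhS
      exact jclosure_min J (jclosure_isIdeal J {d | d ≤ c})
        (fun d hd => subset_jclosure J _ (le_trans hd hhc)) hxh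
    · exact jclosure_min J hI (fun d hd => hI.1 c hcI d hd)
end

section
/- Let C and D be posets. A frame homomorphism F : Id(D) → Id(C) between their frames of downward-closed subsets is of the form I ↦ f⁻¹(I) for some monotone map f : C → D if and only if F preserves arbitrary infima (equivalently, has a left adjoint F_! given by F_!(I) = ⋂{I' : I ⊆ F(I')}). Moreover, in that case f can be recovered from the left adjoint F_! as its restriction to principal ideals: F_!((c)↓) = (f(c))↓ for all c ∈ C. -/
/-- Let `C`, `D` be posets and `F : Id(D) → Id(C)` a frame homomorphism between
their frames of downward-closed subsets (so `F` preserves lower sets, the top,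
binary meets and arbitrary joins, the latter being unions). Then `F` is of the
form `I ↦ f ⁻¹' I` for some monotone `f : C → D` iff `F` preserves arbitrary
infima (intersections); moreover in that case `f` is recovered from the left
adjoint `F_! (I) = ⋂ {I' : I ⊆ F I'}` by `F_! ((c)↓) = (f c)↓`. -/
theorem statement_13 {C D : Type*} [PartialOrder C] [PartialOrder D]
    (F : Set D → Set C)
    (hFlow : ∀ I, IsLowerSet I → IsLowerSet (F I))
    (hFtop : F Set.univ = Set.univ)
    (hFmeet : ∀ I₁ I₂, IsLowerSet I₁ → IsLowerSet I₂ → F (I₁ ∩ I₂) = F I₁ ∩ F I₂)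
    (hFjoin : ∀ K : Set (Set D), (∀ I ∈ K, IsLowerSet I) → F (⋃₀ K) = ⋃₀ (F '' K)) :
    ((∃ f : C → D, Monotone f ∧ ∀ I, IsLowerSet I → F I = f ⁻¹' I) ↔
      (∀ K : Set (Set D), (∀ I ∈ K, IsLowerSet I) → F (⋂₀ K) = ⋂₀ (F '' K))) ∧
    (∀ f : C → D, Monotone f → (∀ I, IsLowerSet I → F I = f ⁻¹' I) →
      ∀ c : C, ⋂₀ {I' : Set D | IsLowerSet I' ∧ {x | x ≤ c} ⊆ F I'} = {y | y ≤ f c}) := by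
  have princ_low : ∀ d : D, IsLowerSet {y | y ≤ d} := fun d a b hab h => hab.trans h
  have Fmono : ∀ I₁ I₂, IsLowerSet I₁ → IsLowerSet I₂ → I₁ ⊆ I₂ → F I₁ ⊆ F I₂ := by
    intro I₁ I₂ h₁ h₂ hsub
    have h := hFmeet _ _ h₁ h₂
    rw [Set.inter_eq_left.mpr hsub] at h
    rw [h]; exact Set.inter_subset_right
  constructor
  · constructor
    · rintro ⟨f, hf, hF⟩ K hK
      have hKlow : IsLowerSet (⋂₀ K) := fun a b hab h I hI => (hK I hI) hab (h I hI)
      rw [hF _ hKlow, Set.preimage_sInter, Set.sInter_image]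
      exact Set.iInter₂_congr fun I hI => (hF I (hK I hI)).symm
    · intro hsInter
      have key : ∀ c : C, ∃ d : D,
          (⋂₀ {I | IsLowerSet I ∧ c ∈ F I}) = {y | y ≤ d} := by
        intro c
        set S : Set (Set D) := {I | IsLowerSet I ∧ c ∈ F I} with hS
        have hSlow : ∀ I ∈ S, IsLowerSet I := fun I hI => hI.1
        have hJlow : IsLowerSet (⋂₀ S) := fun a b hba ha I hI => (hSlow I hI) hba (ha I hI)
        have hcJ : c ∈ F (⋂₀ S) := by
          rw [hsInter S hSlow]
          rintro _ ⟨I, hI, rfl⟩; exact hI.2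
        have hdecomp : ⋂₀ S = ⋃₀ ((fun d => {y | y ≤ d}) '' (⋂₀ S)) := by
          ext y
          simp only [Set.mem_sUnion, Set.mem_image]
          constructor
          · intro hy; exact ⟨_, ⟨y, hy, rfl⟩, le_rfl⟩
          · rintro ⟨_, ⟨d, hd, rfl⟩, hyd⟩; exact hJlow hyd hd
        have hc' : c ∈ ⋃₀ (F '' ((fun d => {y | y ≤ d}) '' (⋂₀ S))) := by
          rw [← hFjoin _ (by rintro _ ⟨d, hd, rfl⟩; exact princ_low d), ← hdecomp]
          exact hcJ
        obtain ⟨_, ⟨_, ⟨d, hd, rfl⟩, rfl⟩, hc⟩ := hc'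
        refine ⟨d, subset_antisymm ?_ ?_⟩
        · exact Set.sInter_subset_of_mem ⟨princ_low d, hc⟩
        · intro y hy; exact hJlow hy hd
      choose f hfspec using key
      have hmemf : ∀ c I, IsLowerSet I → (c ∈ F I ↔ f c ∈ I) := by
        intro c I hI
        constructor
        · intro h
          have hm : f c ∈ ⋂₀ {I | IsLowerSet I ∧ c ∈ F I} := by
            rw [hfspec c]; exact le_rfl
          exact hm I ⟨hI, h⟩
        · intro h
          have hsub : {y | y ≤ f c} ⊆ I := fun y hy => hI hy h
          have hcF : c ∈ F {y | y ≤ f c} := by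
            rw [← hfspec c, hsInter _ (fun J hJ => hJ.1)]
            rintro _ ⟨J, hJ, rfl⟩; exact hJ.2
          exact Fmono _ _ (princ_low _) hI hsub hcF
      refine ⟨f, ?_, ?_⟩
      · intro c c' hcc'
        have h1 : c' ∈ F {y | y ≤ f c'} := (hmemf c' _ (princ_low _)).2 le_rfl
        have h2 : c ∈ F {y | y ≤ f c'} := hFlow _ (princ_low _) hcc' h1
        exact (hmemf c _ (princ_low _)).1 h2
      · intro I hI
        ext x
        exact hmemf x I hI
  · intro f hf hF c
    apply subset_antisymm
    · intro y hy
      refine hy {y | y ≤ f c} ⟨princ_low _, ?_⟩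
      rw [hF _ (princ_low _)]
      intro x hx
      exact hf hx
    · intro y hy I hI
      have hc : c ∈ F I := hI.2 le_rfl
      rw [hF I hI.1] at hc
      exact hI.1 hy hc
end

section
/- A topological space X is discrete if and only if X is sober and has a basis of atomic open subsets, i.e., every open set is a union of nonempty open sets that contain no proper nonempty open subset. -/
/-!
Any two points `a, b` of an atomic open set `A` are inseparable: an open set containing `a`
meets `A` in a nonempty open subset of `A`, which must be all of `A`. In a T₀ space an atomic
open set is therefore a singleton, so a basis of atomic open sets makes every singleton open.
-/

open Set

section

variable {X : Type*} [TopologicalSpace X]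

def IsAtomicOpen (A : Set X) : Prop :=
  IsOpen A ∧ A.Nonempty ∧ ∀ V : Set X, IsOpen V → V ⊆ A → V = ∅ ∨ V = A

namespace IsAtomicOpen

variable {A : Set X}

theorem subset_of_isOpen (hA : IsAtomicOpen A) {W : Set X} (hW : IsOpen W)
    (hWA : (W ∩ A).Nonempty) : A ⊆ W := by
  rcases hA.2.2 (W ∩ A) (hW.inter hA.1) inter_subset_right with h | h
  · exact absurd h hWA.ne_empty
  · exact h ▸ inter_subset_left

theorem inseparable (hA : IsAtomicOpen A) {a b : X} (ha : a ∈ A) (hb : b ∈ A) :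
    Inseparable a b :=
  inseparable_iff_forall_isOpen.2 fun _ hW =>
    ⟨fun haW => hA.subset_of_isOpen hW ⟨a, haW, ha⟩ hb,
      fun hbW => hA.subset_of_isOpen hW ⟨b, hbW, hb⟩ ha⟩

theorem eq_singleton [T0Space X] (hA : IsAtomicOpen A) {x : X} (hx : x ∈ A) : A = {x} :=
  eq_singleton_iff_unique_mem.2 ⟨hx, fun _ hy => (hA.inseparable hy hx).eq⟩

end IsAtomicOpen

theorem isAtomicOpen_singleton {x : X} (hx : IsOpen ({x} : Set X)) : IsAtomicOpen {x} :=
  ⟨hx, singleton_nonempty x, fun _ _ hV => subset_singleton_iff_eq.1 hV⟩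

theorem discreteTopology_of_forall_exists_isAtomicOpen [T0Space X]
    (h : ∀ x : X, ∃ A, IsAtomicOpen A ∧ x ∈ A) : DiscreteTopology X :=
  discreteTopology_iff_isOpen_singleton.2 fun x => by
    obtain ⟨A, hA, hxA⟩ := h x
    exact hA.eq_singleton hxA ▸ hA.1

end

/-- A topological space `X` is discrete iff it is sober and has a basis of atomic
open subsets, i.e. every open set is a union of nonempty open sets containing no
proper nonempty open subset. -/
theorem statement_15 {X : Type*} [TopologicalSpace X] :
    DiscreteTopology X ↔
    (T0Space X ∧ QuasiSober X ∧
      ∀ U : Set X, IsOpen U → ∃ 𝒜 : Set (Set X),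
        (∀ A ∈ 𝒜, IsOpen A ∧ A.Nonempty ∧
          ∀ V : Set X, IsOpen V → V ⊆ A → V = ∅ ∨ V = A) ∧
        U = ⋃₀ 𝒜) := by
  constructor
  · intro _
    refine ⟨inferInstance, inferInstance, fun U _ => ⟨(fun x => {x}) '' U, ?_, ?_⟩⟩
    · rintro _ ⟨x, -, rfl⟩
      exact isAtomicOpen_singleton (isOpen_discrete _)
    · simp [sUnion_image]
  · rintro ⟨_, -, hbasis⟩
    refine discreteTopology_of_forall_exists_isAtomicOpen fun x => ?_
    obtain ⟨𝒜, h𝒜, huniv⟩ := hbasis univ isOpen_univ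
    obtain ⟨A, hA𝒜, hxA⟩ := mem_sUnion.1 (huniv ▸ mem_univ x)
    exact ⟨A, h𝒜 A hA𝒜, hxA⟩
end
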